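/- There do not exist three pairwise distinct points q₁, q₂, q₃ ∈ ℝ² lying on the conic {(x,y) : y² + 2x − 2 = 0} such that each of the three lines through the pairs (q₁,q₂), (q₂,q₃), (q₃,q₁) is tangent to the unit circle x² + y² = 1 (i.e., lies at distance 1 from the origin). In other words, no triangle is inscribed in the conic y² + 2x − 2 = 0 and circumscribed about the unit circle. -/
import Mathlib


/-- The line `{(x,y) : a·x + b·y + c = 0}` (with `(a,b) ≠ (0,0)`) passes through both
points `p` and `q` and is tangent to the unit circle `x² + y² = 1`, tangency being the
condition that the distance from the origin equals `1`, i.e. `c² = a² + b²`. -/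
def TangentLineThrough (p q : ℝ × ℝ) : Prop :=
  ∃ a b c : ℝ, (a, b) ≠ (0, 0) ∧
    a * p.1 + b * p.2 + c = 0 ∧ a * q.1 + b * q.2 + c = 0 ∧ c ^ 2 = a ^ 2 + b ^ 2

/-- Tangency condition for the chord of the parabola through parameters `s ≠ t`. -/
lemma tangent_params (s t : ℝ) (hst : s ≠ t)
    (h : TangentLineThrough (1 - s ^ 2 / 2, s) (1 - t ^ 2 / 2, t)) :
    s * t = s - t ∨ s * t = t - s := by
  obtain ⟨a, b, c, hab, h1, h2, hc⟩ := h
  simp only at h1 h2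
  have hstne : s - t ≠ 0 := sub_ne_zero.mpr hst
  have hb : b = a * (s + t) / 2 := by
    have key : (s - t) * (b - a * (s + t) / 2) = 0 := by linear_combination h1 - h2
    have := (mul_eq_zero.mp key).resolve_left hstne
    linarith
  have ha : a ≠ 0 := by
    rintro rfl
    apply hab
    have : b = 0 := by rw [hb]; ring
    simp [this]
  have hc' : c = -(a * (2 + s * t) / 2) := by linear_combination h1 - s * hb
  rw [hb, hc'] at hc
  have key2 : a ^ 2 * ((s * t + t - s) * (s * t + s - t)) = 0 := by linear_combination 4 * hc
  have h0 : (s * t + t - s) * (s * t + s - t) = 0 :=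
    (mul_eq_zero.mp key2).resolve_left (pow_ne_zero 2 ha)
  rcases mul_eq_zero.mp h0 with h | h
  · left; linarith
  · right; linarith

lemma recip (s t : ℝ) (hs : s ≠ 0) (ht : t ≠ 0) (h : s * t = s - t ∨ s * t = t - s) :
    1 / t - 1 / s = 1 ∨ 1 / t - 1 / s = -1 := by
  rcases h with h | h
  · left; field_simp; linear_combination -h
  · right; field_simp; linear_combination h

lemma nonzero (s t : ℝ) (hst : s ≠ t) (h : s * t = s - t ∨ s * t = t - s) :
    s ≠ 0 ∧ t ≠ 0 := by
  constructor
  · rintro rfl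
    rcases h with h | h <;> simp_all
  · rintro rfl
    rcases h with h | h <;> simp_all

/-- no triangle is inscribed in the conic `y² + 2x − 2 = 0` and
circumscribed about the unit circle `x² + y² = 1`: there are no three pairwise distinct
points on the conic such that each of the three lines joining a pair of them is tangent
to the unit circle. -/
theorem no_inscribed_circumscribed_triangle :
    ¬ ∃ q₁ q₂ q₃ : ℝ × ℝ, q₁ ≠ q₂ ∧ q₂ ≠ q₃ ∧ q₃ ≠ q₁ ∧
      q₁.2 ^ 2 + 2 * q₁.1 - 2 = 0 ∧ q₂.2 ^ 2 + 2 * q₂.1 - 2 = 0 ∧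
      q₃.2 ^ 2 + 2 * q₃.1 - 2 = 0 ∧
      TangentLineThrough q₁ q₂ ∧ TangentLineThrough q₂ q₃ ∧ TangentLineThrough q₃ q₁ := by
  rintro ⟨q₁, q₂, q₃, h12, h23, h31, e1, e2, e3, T12, T23, T31⟩
  have p1 : q₁ = (1 - q₁.2 ^ 2 / 2, q₁.2) := by
    have : q₁.1 = 1 - q₁.2 ^ 2 / 2 := by linarith
    exact Prod.ext this rfl
  have p2 : q₂ = (1 - q₂.2 ^ 2 / 2, q₂.2) := by
    have : q₂.1 = 1 - q₂.2 ^ 2 / 2 := by linarith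
    exact Prod.ext this rfl
  have p3 : q₃ = (1 - q₃.2 ^ 2 / 2, q₃.2) := by
    have : q₃.1 = 1 - q₃.2 ^ 2 / 2 := by linarith
    exact Prod.ext this rfl
  set s := q₁.2
  set t := q₂.2
  set u := q₃.2
  have hst : s ≠ t := fun h => h12 (by rw [p1, p2, h])
  have htu : t ≠ u := fun h => h23 (by rw [p2, p3, h])
  have hus : u ≠ s := fun h => h31 (by rw [p3, p1, h])
  rw [p1, p2] at T12
  rw [p2, p3] at T23
  rw [p3, p1] at T31
  have H12 := tangent_params s t hst T12
  have H23 := tangent_params t u htu T23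
  have H31 := tangent_params u s hus T31
  obtain ⟨hs, ht⟩ := nonzero s t hst H12
  obtain ⟨-, hu⟩ := nonzero t u htu H23
  have R12 := recip s t hs ht H12
  have R23 := recip t u ht hu H23
  have R31 := recip u s hu hs H31
  rcases R12 with h1 | h1 <;> rcases R23 with h2 | h2 <;> rcases R31 with h3 | h3 <;>
    linarith
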